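/- arXiv:1907.04994 — 3 statements merged into one kernel-verified Lean document; each statement's English description precedes it below -/
import Mathlib

section
/- Let G = PGL₂(F₇), let A = PSL₂(F₇) regarded as a normal subgroup of index 2 in G, and let H be a Sylow 2-subgroup of G. Then H ∩ A is a Sylow 2-subgroup of A (of order 8), but H ∩ A is not a {2,3}-maximal subgroup of A. -/
/-- A subgroup is a `π`-group if every prime dividing its order lies in `π`. -/
def IsPiGroup (π : Set ℕ) {G : Type*} [Group G] (H : Subgroup G) : Prop :=
  ∀ p : ℕ, p.Prime → p ∣ Nat.card H → p ∈ π

/-- A subgroup is `π`-maximal if it is a `π`-group not properly contained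
in any `π`-subgroup. -/
def IsPiMaximal (π : Set ℕ) {G : Type*} [Group G] (H : Subgroup G) : Prop :=
  IsPiGroup π H ∧ ∀ K : Subgroup G, IsPiGroup π K → H ≤ K → K = H

/-- `A` is normal in `B` (as subgroups of an ambient group). -/
def NormalIn {G : Type*} [Group G] (A B : Subgroup G) : Prop :=
  A ≤ B ∧ ∀ b ∈ B, ∀ a ∈ A, b * a * b⁻¹ ∈ A

/-- A subgroup is subnormal if it is connected to the whole group by a
finite chain, each term normal in the next. -/
def IsSubnormal {G : Type*} [Group G] (A : Subgroup G) : Prop :=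
  Relation.ReflTransGen NormalIn A ⊤

/-- A witness to the `π`-submaximality of `H ≤ G`: a finite group `carrier`,
an embedding `ε : G → carrier` with subnormal image, and a `π`-maximal
subgroup `K` of `carrier` with `ε(H) = ε(G) ∩ K`. -/
structure PiSubmaximalWitness (π : Set ℕ) (G : Type u) [Group G] (H : Subgroup G) :
    Type (u + 1) where
  carrier : Type u
  [grp : Group carrier]
  [fin : Finite carrier]
  ε : G →* carrier
  inj : Function.Injective ε
  subnormal : IsSubnormal ε.range
  K : Subgroup carrier
  maxK : IsPiMaximal π K
  eq : H.map ε = ε.range ⊓ K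

/-- A subgroup `H ≤ G` is `π`-submaximal if `G` embeds as a subnormal subgroup into a
finite group `G*` in which a `π`-maximal subgroup intersects `G` in `H`. -/
def IsPiSubmaximal (π : Set ℕ) {G : Type u} [Group G] (H : Subgroup G) : Prop :=
  Nonempty (PiSubmaximalWitness π G H)

/-- A minimal normal subgroup: nontrivial, normal, containing no nontrivial
proper normal subgroup of the ambient group. -/
def IsMinimalNormal {G : Type*} [Group G] (U : Subgroup G) : Prop :=
  U.Normal ∧ U ≠ ⊥ ∧ ∀ M : Subgroup G, M.Normal → M ≤ U → M = ⊥ ∨ M = U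

/-- `PGL₂(F₇)`, the projective general linear group of degree 2 over the field with
7 elements. -/
abbrev PGL27 : Type :=
  Matrix.GeneralLinearGroup (Fin 2) (ZMod 7) ⧸
    Subgroup.center (Matrix.GeneralLinearGroup (Fin 2) (ZMod 7))

/-- `PSL₂(F₇)` regarded as a subgroup of `PGL₂(F₇)`: the image of `SL₂(F₇)` under the
composite `SL₂(F₇) → GL₂(F₇) → PGL₂(F₇)`. -/
def PSLinPGL27 : Subgroup PGL27 :=
  ((QuotientGroup.mk' (Subgroup.center (Matrix.GeneralLinearGroup (Fin 2) (ZMod 7)))).comp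
    Matrix.SpecialLinearGroup.toGL).range

/-!
`PSL₂(7)` is the image of `SL₂(7)`, of order `336 / 2 = 168`, in `PGL₂(7)`, of order `336`;
so it has index 2 and is normal. A Sylow 2-subgroup of `PGL₂(7)` (order 16) cannot lie in
`PSL₂(7)`, so it meets `PSL₂(7)` in a subgroup of order 8, which is Sylow there.

For non-maximality, let `V ≤ PSL₂(7)` be a Klein four-group. It has index 2 in some Sylow
2-subgroup, which therefore normalizes it, and an element of order 3 permutes its involutions,
while `V` is not normal. So `N(V)` has order 24 (it is `S₄`): a `{2,3}`-group properly
containing a Sylow 2-subgroup. Since all Sylow 2-subgroups are conjugate, none of them is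
`{2,3}`-maximal.
-/

open Matrix Pointwise MatrixGroups

namespace Matrix

variable {n R : Type*} [Fintype n] [DecidableEq n] [Nonempty n] [CommRing R]

theorem GeneralLinearGroup.card_center : Nat.card (Subgroup.center (GL n R)) = Nat.card Rˣ := by
  rw [GeneralLinearGroup.center_eq_range_scalar]
  refine (Nat.card_congr (MonoidHom.ofInjective fun u v huv => ?_).toEquiv).symm
  have := congrArg (fun g : GL n R => g.val (Classical.arbitrary n) (Classical.arbitrary n)) huv
  exact Units.ext (by simpa using this)

theorem ProjGenLinGroup.card_mul_card_units :
    Nat.card (PGL(n, R)) * Nat.card Rˣ = Nat.card (GL n R) := by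
  rw [← GeneralLinearGroup.card_center (n := n), mul_comm]
  exact (Subgroup.center (GL n R)).card_mul_index

theorem SpecialLinearGroup.card_mul_card_units :
    Nat.card (SpecialLinearGroup n R) * Nat.card Rˣ = Nat.card (GL n R) := by
  have hSL : Nat.card (SpecialLinearGroup n R) =
      Nat.card (GeneralLinearGroup.det (n := n) (R := R)).ker := by
    rw [Nat.card_congr (MonoidHom.ofInjective (toGL_injective (n := n) (R := R))).toEquiv]
    congr 2
    ext g
    refine ⟨fun ⟨s, hs⟩ => ?_, fun hg => ⟨⟨g.val, ?_⟩, Units.ext rfl⟩⟩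
    · rw [MonoidHom.mem_ker, ← hs, Units.ext_iff]
      exact s.prop
    · simpa [Units.ext_iff] using hg
  rw [hSL, ← (GeneralLinearGroup.det (n := n) (R := R)).ker.card_mul_index, Subgroup.index_ker,
    MonoidHom.range_eq_top.mpr GeneralLinearGroup.det_surjective, Subgroup.card_top]

theorem SpecialLinearGroup.card_range_toPGL_mul :
    Nat.card (toPGL (n := n) (R := R)).range * Nat.card (rootsOfUnity (Fintype.card n) R) =
      Nat.card (SpecialLinearGroup n R) := by
  rw [← Subgroup.index_ker, toPGL_ker,
    ← Nat.card_congr (center_equiv_rootsOfUnity' (Classical.arbitrary n)).toEquiv,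
    mul_comm, Subgroup.card_mul_index]

end Matrix

section Generic

variable {G : Type*} [Group G]

theorem IsPiGroup.of_card_dvd {π : Set ℕ} {K : Subgroup G} {n : ℕ} (hK : Nat.card K ∣ n)
    (hn : ∀ p, p.Prime → p ∣ n → p ∈ π) : IsPiGroup π K :=
  fun p hp hpK => hn p hp (hpK.trans hK)

variable [Finite G] {p : ℕ} [Fact p.Prime]

theorem Sylow.not_isPiMaximal_of_lt {π : Set ℕ} (P : Sylow p G) {K : Subgroup G}
    (hK : IsPiGroup π K) (hPK : (P : Subgroup G) < K) (Q : Sylow p G) :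
    ¬ IsPiMaximal π (Q : Subgroup G) := by
  rintro ⟨-, hQ⟩
  obtain ⟨g, rfl⟩ := MulAction.exists_smul_eq G P Q
  rw [Sylow.coe_subgroup_smul] at hQ
  have hgK : IsPiGroup π (MulAut.conj g • K) :=
    IsPiGroup.of_card_dvd (Nat.card_congr (Subgroup.equivSMul _ K).toEquiv).symm.dvd hK
  have hle : MulAut.conj g • (P : Subgroup G) ≤ MulAut.conj g • K :=
    Subgroup.pointwise_smul_le_pointwise_smul_iff.mpr hPK.le
  exact hPK.ne (MulAction.injective (MulAut.conj g) (hQ _ hgK hle)).symm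

theorem Sylow.exists_coe_eq_inf_subgroupOf (P : Sylow p G) {N : Subgroup G} [N.Normal]
    (hN : N.index = p) :
    ∃ Q : Sylow p N, (Q : Subgroup N) = ((P : Subgroup G) ⊓ N).subgroupOf N := by
  have hp : p.Prime := Fact.out
  have hPN : ¬ (P : Subgroup G) ≤ N := fun h =>
    P.not_dvd_index (by simpa only [hN] using Subgroup.index_dvd_of_le h)
  have hrel : N.relIndex P = p := by
    rcases (Nat.dvd_prime hp).mp (hN ▸ N.relIndex_dvd_index_of_normal P) with h | h
    · exact absurd (Subgroup.relIndex_eq_one.mp h) hPN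
    · exact h
  have hcard : Nat.card (((P : Subgroup G) ⊓ N).subgroupOf N) * p = Nat.card P := by
    have h := (N.subgroupOf P).card_mul_index
    rw [show (N.subgroupOf (P : Subgroup G)).index = p from hrel, ← Subgroup.inf_subgroupOf_right,
      Nat.card_congr (Subgroup.subgroupOfEquivOfLe inf_le_right).toEquiv] at h
    rw [← h, Nat.card_congr (Subgroup.subgroupOfEquivOfLe inf_le_right).toEquiv, inf_comm]
  have hG : Nat.card N * p = Nat.card G := hN ▸ N.card_mul_index
  refine ⟨Sylow.ofCard _ ?_, Sylow.coe_ofCard _ _⟩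
  rw [P.card_eq_multiplicity, ← hG, Nat.factorization_mul Nat.card_pos.ne' hp.ne_zero,
    Finsupp.add_apply, hp.factorization_self, pow_succ] at hcard
  exact Nat.eq_of_mul_eq_mul_right hp.pos hcard

theorem IsPGroup.le_normalizer_of_card_eq_mul {V P : Subgroup G} (hP : IsPGroup p P)
    (hVP : V ≤ P) (hcard : Nat.card P = Nat.card V * p) : P ≤ Subgroup.normalizer V := by
  have hp : p.Prime := Fact.out
  have hidx : (V.subgroupOf P).index = p := by
    have h := (V.subgroupOf P).card_mul_index
    rw [Nat.card_congr (Subgroup.subgroupOfEquivOfLe hVP).toEquiv, hcard] at h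
    exact Nat.eq_of_mul_eq_mul_left Nat.card_pos h
  obtain ⟨k, hk⟩ := hP.exists_card_eq
  have hk0 : k ≠ 0 := by
    rintro rfl
    rw [pow_zero, hcard] at hk
    exact hp.one_lt.ne' (Nat.eq_one_of_mul_eq_one_left hk)
  have : (V.subgroupOf P).Normal :=
    Subgroup.normal_of_index_eq_minFac_card (by rw [hidx, hk, hp.pow_minFac hk0])
  exact Subgroup.le_normalizer_of_normal_subgroupOf hVP

end Generic

instance fact_prime_seven : Fact (Nat.Prime 7) := ⟨by norm_num⟩

theorem card_GL_two_zmod_seven : Nat.card (GL (Fin 2) (ZMod 7)) = 2016 := by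
  rw [Matrix.card_GL_field, Fin.prod_univ_two]
  norm_num [ZMod.card]

theorem card_units_zmod_seven : Nat.card (ZMod 7)ˣ = 6 := by
  rw [Nat.card_eq_fintype_card, ZMod.card_units]

theorem card_rootsOfUnity_two_zmod_seven : Nat.card (rootsOfUnity 2 (ZMod 7)) = 2 :=
  (IsPrimitiveRoot.neg_one 7 (by norm_num)).card_rootsOfUnity

theorem card_PGL27 : Nat.card PGL27 = 336 := by
  have h : Nat.card PGL27 * 6 = 2016 := by
    rw [← card_units_zmod_seven, ← card_GL_two_zmod_seven]
    exact ProjGenLinGroup.card_mul_card_units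
  omega

-- The library's `DecidableEq` on quotient groups is stuck in the kernel, so `decide` could not
-- compare elements of `PGL27`; here `x` and `y` are identified iff `x⁻¹ * y` is scalar.
instance : DecidableEq PGL27 := fun a b =>
  Quotient.recOnSubsingleton₂ a b fun x y =>
    decidable_of_iff (∃ c : ZMod 7, scalar (Fin 2) c = (x⁻¹ * y).val) <| by
      rw [← Set.mem_range, ← GeneralLinearGroup.mem_center_iff_val_mem_range_scalar,
        ← QuotientGroup.eq]

namespace PSLinPGL27

theorem card_eq : Nat.card PSLinPGL27 = 168 := by
  have hSL : Nat.card (SpecialLinearGroup (Fin 2) (ZMod 7)) * 6 = 2016 := by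
    rw [← card_units_zmod_seven, ← card_GL_two_zmod_seven]
    exact SpecialLinearGroup.card_mul_card_units
  have hPSL : Nat.card PSLinPGL27 * Nat.card (rootsOfUnity 2 (ZMod 7)) =
      Nat.card (SpecialLinearGroup (Fin 2) (ZMod 7)) :=
    SpecialLinearGroup.card_range_toPGL_mul
  rw [card_rootsOfUnity_two_zmod_seven] at hPSL
  omega

theorem index_eq : PSLinPGL27.index = 2 := by
  have := PSLinPGL27.card_mul_index
  rw [card_PGL27, card_eq] at this
  omega

instance normal : PSLinPGL27.Normal :=
  Subgroup.normal_of_index_eq_two index_eq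

theorem card_sylow_two (P : Sylow 2 PSLinPGL27) : Nat.card P = 8 := by
  rw [P.card_eq_multiplicity, card_eq, Nat.factorization_def _ Nat.prime_two,
    show (168 : ℕ) = 2 ^ 3 * 21 by norm_num, padicValNat.mul (by norm_num) (by norm_num),
    padicValNat.prime_pow, padicValNat.eq_zero_of_not_dvd (by norm_num)]
  rfl

def ofSL : SpecialLinearGroup (Fin 2) (ZMod 7) →* PSLinPGL27 :=
  ((QuotientGroup.mk' (Subgroup.center (GL (Fin 2) (ZMod 7)))).comp
    SpecialLinearGroup.toGL).rangeRestrict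

def ofEntries (a b c d : ZMod 7) (h : a * d - b * c = 1 := by decide) : PSLinPGL27 :=
  ofSL ⟨!![a, b; c, d], by rwa [Matrix.det_fin_two_of]⟩

-- `i = !![0, 1; -1, 0]`, `j = !![3, 2; 2, -3]` and `i * j`: commuting involutions of `PSL₂(7)`.
-- Conjugation by `kleinFourRotation` maps `i ↦ j ↦ i * j ↦ i`.
def kleinFourFinset : Finset PSLinPGL27 :=
  {1, ofEntries 0 1 6 0, ofEntries 3 2 2 4, ofEntries 2 4 4 5}

def kleinFour : Subgroup PSLinPGL27 where
  carrier := kleinFourFinset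
  one_mem' := by decide
  mul_mem' := by
    simp only [kleinFourFinset, Finset.mem_coe, Finset.mem_insert, Finset.mem_singleton]
    rintro a b (rfl | rfl | rfl | rfl) (rfl | rfl | rfl | rfl) <;> decide
  inv_mem' := by
    simp only [kleinFourFinset, Finset.mem_coe, Finset.mem_insert, Finset.mem_singleton]
    rintro a (rfl | rfl | rfl | rfl) <;> decide

theorem card_kleinFour : Nat.card kleinFour = 4 :=
  (Nat.card_coe_set_eq _).trans ((Set.ncard_coe_finset kleinFourFinset).trans (by decide))

theorem mem_kleinFour {x : PSLinPGL27} : x ∈ kleinFour ↔ x ∈ kleinFourFinset := Iff.rfl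

instance : DecidablePred (· ∈ kleinFour) := fun _ => decidable_of_iff _ mem_kleinFour.symm

def kleinFourRotation : PSLinPGL27 := ofEntries 2 6 0 4

def unipotent : PSLinPGL27 := ofEntries 1 1 0 1

theorem orderOf_kleinFourRotation : orderOf kleinFourRotation = 3 :=
  orderOf_eq_prime (by decide) (by decide)

theorem kleinFourRotation_mem_normalizer :
    kleinFourRotation ∈ Subgroup.normalizer (kleinFour : Set PSLinPGL27) := by
  refine Subgroup.mem_normalizer_fintype fun x hx => ?_
  simp only [SetLike.mem_coe, mem_kleinFour, kleinFourFinset, Finset.mem_insert,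
    Finset.mem_singleton] at hx ⊢
  rcases hx with rfl | rfl | rfl | rfl <;> decide

theorem unipotent_not_mem_normalizer :
    unipotent ∉ Subgroup.normalizer (kleinFour : Set PSLinPGL27) := fun h =>
  absurd ((Subgroup.mem_normalizer_iff.mp h (ofEntries 0 1 6 0)).mp (by decide)) (by decide)

theorem exists_sylow_two_le_normalizer_kleinFour : ∃ P : Sylow 2 PSLinPGL27,
    (P : Subgroup PSLinPGL27) ≤ Subgroup.normalizer (kleinFour : Set PSLinPGL27) := by
  obtain ⟨P, hVP⟩ :=
    (IsPGroup.of_card (card_kleinFour.trans (by norm_num : 4 = 2 ^ 2))).exists_le_sylow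
  refine ⟨P, P.isPGroup'.le_normalizer_of_card_eq_mul hVP ?_⟩
  rw [card_sylow_two, card_kleinFour]

theorem card_normalizer_kleinFour :
    Nat.card (Subgroup.normalizer (kleinFour : Set PSLinPGL27)) = 24 := by
  set N := Subgroup.normalizer (kleinFour : Set PSLinPGL27)
  obtain ⟨P, hPN⟩ := exists_sylow_two_le_normalizer_kleinFour
  have h8 : 8 ∣ Nat.card N := card_sylow_two P ▸ Subgroup.card_dvd_of_le hPN
  have h3 : 3 ∣ Nat.card N := by
    rw [← orderOf_kleinFourRotation, ← Subgroup.orderOf_mk _ kleinFourRotation_mem_normalizer]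
    exact orderOf_dvd_natCard _
  have hdvd : Nat.card N ∣ 168 := card_eq ▸ Subgroup.card_subgroup_dvd_card N
  have hne : Nat.card N ≠ 168 := by
    rw [← card_eq, Ne, Subgroup.card_eq_iff_eq_top, Subgroup.eq_top_iff']
    exact fun h => unipotent_not_mem_normalizer (h _)
  obtain ⟨m, hm⟩ : 24 ∣ Nat.card N := Nat.Coprime.mul_dvd_of_dvd_of_dvd (by norm_num) h8 h3
  rw [hm] at hdvd hne ⊢
  have hm7 : m ∣ 7 := Nat.dvd_of_mul_dvd_mul_left (by norm_num) (hdvd : 24 * m ∣ 24 * 7)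
  rcases (Nat.dvd_prime (by norm_num)).mp hm7 with rfl | rfl
  · rfl
  · exact absurd rfl hne

theorem exists_sylow_two_lt_isPiGroup : ∃ (P : Sylow 2 PSLinPGL27) (K : Subgroup PSLinPGL27),
    IsPiGroup {2, 3} K ∧ (P : Subgroup PSLinPGL27) < K := by
  obtain ⟨P, hPN⟩ := exists_sylow_two_le_normalizer_kleinFour
  refine ⟨P, _, IsPiGroup.of_card_dvd (dvd_of_eq card_normalizer_kleinFour) fun p hp h => ?_,
    hPN.lt_of_ne fun h => ?_⟩
  · have := Nat.le_of_dvd (by norm_num) h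
    interval_cases p <;> simp_all +decide
  · have := card_normalizer_kleinFour
    rw [← h, card_sylow_two] at this
    exact absurd this (by norm_num)

end PSLinPGL27

/-- `PSL₂(F₇)` is a normal subgroup of index 2 in `PGL₂(F₇)`, and if `H` is a Sylow
`2`-subgroup of `PGL₂(F₇)` then `H ∩ PSL₂(F₇)` is a Sylow `2`-subgroup of `PSL₂(F₇)` of
order `8` which is not a `{2,3}`-maximal subgroup of `PSL₂(F₇)`. -/
theorem stmt7 :
    PSLinPGL27.Normal ∧ PSLinPGL27.index = 2 ∧
    ∀ H : Sylow 2 PGL27,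
      (∃ Q : Sylow 2 PSLinPGL27,
        (Q : Subgroup PSLinPGL27) = ((H : Subgroup PGL27) ⊓ PSLinPGL27).subgroupOf PSLinPGL27) ∧
      Nat.card (((H : Subgroup PGL27) ⊓ PSLinPGL27).subgroupOf PSLinPGL27) = 8 ∧
      ¬ IsPiMaximal {2, 3} (((H : Subgroup PGL27) ⊓ PSLinPGL27).subgroupOf PSLinPGL27) := by
  refine ⟨inferInstance, PSLinPGL27.index_eq, fun H => ?_⟩
  obtain ⟨Q, hQ⟩ := H.exists_coe_eq_inf_subgroupOf PSLinPGL27.index_eq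
  obtain ⟨P, K, hK, hPK⟩ := PSLinPGL27.exists_sylow_two_lt_isPiGroup
  rw [← hQ]
  exact ⟨⟨Q, rfl⟩, PSLinPGL27.card_sylow_two Q, P.not_isPiMaximal_of_lt hK hPK Q⟩
end

section
/- Let π be a set of primes, G a finite group, H a π-submaximal subgroup of G, and A a subnormal subgroup of G. Then H ∩ A is a π-submaximal subgroup of A. -/
/-
The embedding `A ↪ G ↪ G*` witnesses the claim with the same `π`-maximal subgroup `K`:
a subnormal chain from `A` to `G` is carried by `ε` to one from `ε(A)` to `ε(G)`, which
continues to `G*`, and `ε(A) ∩ K = ε(A) ∩ ε(G) ∩ K = ε(A) ∩ ε(H) = ε(H ∩ A)` as `ε` is injective.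
-/

theorem NormalIn.map {G G' : Type*} [Group G] [Group G'] (f : G →* G')
    {A B : Subgroup G} (h : NormalIn A B) : NormalIn (A.map f) (B.map f) := by
  refine ⟨Subgroup.map_mono h.1, ?_⟩
  rintro _ ⟨b, hb, rfl⟩ _ ⟨a, ha, rfl⟩
  exact ⟨b * a * b⁻¹, h.2 b hb a ha, by simp⟩

theorem IsSubnormal.map {G G' : Type*} [Group G] [Group G'] {f : G →* G'}
    (hf : IsSubnormal f.range) {A : Subgroup G} (hA : IsSubnormal A) :
    IsSubnormal (A.map f) := by
  have hchain : Relation.ReflTransGen NormalIn (A.map f) ((⊤ : Subgroup G).map f) :=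
    hA.lift _ fun _ _ h => h.map f
  rw [← MonoidHom.range_eq_map] at hchain
  exact hchain.trans hf

theorem Subgroup.map_subgroupOf_inf_eq {G G' : Type*} [Group G] [Group G'] {f : G →* G'}
    (hf : Function.Injective f) {H A : Subgroup G} {K : Subgroup G'}
    (hH : H.map f = f.range ⊓ K) :
    ((H ⊓ A).subgroupOf A).map (f.comp A.subtype) = A.map f ⊓ K := by
  rw [← Subgroup.map_map, Subgroup.subgroupOf_map_subtype, inf_assoc, inf_idem,
    Subgroup.map_inf H A f hf, hH, inf_right_comm, inf_of_le_right (A.map_le_range f)]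

namespace PiSubmaximalWitness

variable {π : Set ℕ} {G : Type u} [Group G] {H : Subgroup G}

def restrict (w : PiSubmaximalWitness π G H) {A : Subgroup G} (hA : IsSubnormal A) :
    PiSubmaximalWitness π A ((H ⊓ A).subgroupOf A) :=
  letI := w.grp
  letI := w.fin
  have hrange : (w.ε.comp A.subtype).range = A.map w.ε := by
    rw [MonoidHom.range_comp, A.range_subtype]
  { carrier := w.carrier
    ε := w.ε.comp A.subtype
    inj := w.inj.comp A.subtype_injective
    subnormal := hrange ▸ w.subnormal.map hA
    K := w.K
    maxK := w.maxK
    eq := hrange ▸ Subgroup.map_subgroupOf_inf_eq w.inj w.eq }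

end PiSubmaximalWitness

theorem stmt10_general (π : Set ℕ) {G : Type u} [Group G]
    (H : Subgroup G) (hH : IsPiSubmaximal π H)
    (A : Subgroup G) (hA : IsSubnormal A) :
    IsPiSubmaximal π ((H ⊓ A).subgroupOf A) :=
  hH.map (·.restrict hA)

/-- If `H` is a `π`-submaximal subgroup of a finite group `G` and `A` is subnormal in `G`,
then `H ∩ A` is a `π`-submaximal subgroup of `A`. -/
theorem stmt10 (π : Set ℕ) {G : Type u} [Group G] [Finite G]
    (H : Subgroup G) (hH : IsPiSubmaximal π H)
    (A : Subgroup G) (hA : IsSubnormal A) :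
    IsPiSubmaximal π ((H ⊓ A).subgroupOf A) :=
  stmt10_general π H hH A hA
end

section
/- Let π be a set of primes, let X be a finite group having at least two conjugacy classes of π-maximal subgroups, let Y be an arbitrary finite group, let G = X ≀ Y be the regular wreath product (the semidirect product of the direct power X^Y with Y acting by permuting coordinates), and let φ : G → Y be the natural epimorphism with kernel X^Y. Then every π-subgroup of Y equals φ(H) for some π-maximal subgroup H of G. -/
/-- The automorphism of the base group `Y → X` given by permuting coordinates by left
translation by `y`. -/
def wreathAut {X Y : Type*} [Group X] [Group Y] (y : Y) : MulAut (Y → X) where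
  toFun f := fun z => f (y⁻¹ * z)
  invFun f := fun z => f (y * z)
  left_inv f := by funext z; simp [← mul_assoc]
  right_inv f := by funext z; simp [← mul_assoc]
  map_mul' f g := rfl

/-- The permutation action of `Y` on the base group `Y → X` of the regular wreath
product, as a homomorphism `Y →* MulAut (Y → X)`. -/
def wreathAction (X Y : Type*) [Group X] [Group Y] : Y →* MulAut (Y → X) where
  toFun := wreathAut
  map_one' := by ext f z; simp [wreathAut]
  map_mul' a b := by ext f z; simp [wreathAut, mul_assoc]

/-- The regular wreath product `X ≀ Y`: the semidirect product of the base group `X^Y`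
with `Y` acting by permuting coordinates. -/
abbrev RegularWreathProductSD (X Y : Type*) [Group X] [Group Y] : Type _ :=
  SemidirectProduct (Y → X) Y (wreathAction X Y)

/-!
Let `A`, `B` be non-conjugate `π`-maximal subgroups of `X` and `S` a `π`-subgroup of `Y`.
The subgroup `D ≤ X^Y` with `A` in the coordinates of `S` and `B` in the others is
`S`-invariant, so `D ⋊ S` is a `π`-subgroup of `X ≀ Y`; let `H` be a `π`-maximal subgroup
containing it. If some `(f, y) ∈ H` had `y ∉ S`, the `y`-th coordinates of `H ∩ X^Y` would
form a `π`-subgroup containing `B`, hence equal to `B`, while conjugating the copy of `A` in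
coordinate `1` by `(f, y)` puts `A^{f(y)}` into it. Maximality of `A^{f(y)}` would then give
`A^{f(y)} = B`. Hence `φ(H) = S`.
-/

variable {π : Set ℕ}

section PiGroups

variable {G G' : Type*} [Group G] [Group G']

namespace IsPiGroup

theorem of_card_dvd_s19 {K : Subgroup G} {L : Subgroup G'} (hKL : Nat.card K ∣ Nat.card L)
    (hL : IsPiGroup π L) : IsPiGroup π K :=
  fun p hp hpK => hL p hp (hpK.trans hKL)

theorem map {K : Subgroup G} (hK : IsPiGroup π K) (f : G →* G') : IsPiGroup π (K.map f) :=
  hK.of_card_dvd_s19 (Subgroup.card_map_dvd K f)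

theorem comap_of_injective {K : Subgroup G'} (hK : IsPiGroup π K) {f : G →* G'}
    (hf : Function.Injective f) : IsPiGroup π (K.comap f) :=
  hK.of_card_dvd_s19 <| Subgroup.card_map_of_injective hf ▸ Subgroup.card_dvd_of_le (K.map_comap_le f)

theorem pi {η : Type*} [Finite η] {f : η → Type*} [∀ i, Group (f i)]
    {H : ∀ i, Subgroup (f i)} (hH : ∀ i, IsPiGroup π (H i)) :
    IsPiGroup π (Subgroup.pi Set.univ H) := by
  have := Fintype.ofFinite η
  have hcard : Nat.card (Subgroup.pi Set.univ H) = ∏ i, Nat.card (H i) := by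
    rw [← Nat.card_pi]
    exact Nat.card_congr <| (Equiv.subtypeEquivRight fun x => by simp [Subgroup.mem_pi]).trans
      Equiv.subtypePiEquivPi
  intro p hp hpH
  rw [hcard] at hpH
  obtain ⟨i, -, hpi⟩ := (Prime.dvd_finsetProd_iff hp.prime _).mp hpH
  exact hH i p hp hpi

end IsPiGroup

theorem isPiMaximal_iff_maximal {H : Subgroup G} :
    IsPiMaximal π H ↔ Maximal (IsPiGroup π) H := by
  simp only [IsPiMaximal, maximal_iff, eq_comm]

theorem exists_isPiMaximal_le [Finite G] {K : Subgroup G} (hK : IsPiGroup π K) :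
    ∃ H : Subgroup G, IsPiMaximal π H ∧ K ≤ H := by
  obtain ⟨H, hKH, hH⟩ := Finite.exists_le_maximal hK
  exact ⟨H, isPiMaximal_iff_maximal.mpr hH, hKH⟩

theorem IsPiMaximal.map_equiv {K : Subgroup G} (hK : IsPiMaximal π K) (e : G ≃* G') :
    IsPiMaximal π (K.map e.toMonoidHom) := by
  refine ⟨hK.1.map _, fun L hL hKL => ?_⟩
  have hLK : L.map e.symm.toMonoidHom = K := by
    refine hK.2 _ (hL.map _) ?_
    rw [Subgroup.map_le_iff_le_comap] at hKL
    simpa [Subgroup.map_equiv_eq_comap_symm] using hKL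
  rw [← hLK, Subgroup.map_map]
  simp

end PiGroups

namespace SemidirectProduct

variable {N G : Type*} [Group N] [Group G] {φ : G →* MulAut N}

theorem conj_inl (x : N ⋊[φ] G) (n : N) :
    x * inl n * x⁻¹ = inl (x.left * φ x.right n * x.left⁻¹) := by
  conv_lhs => rw [← inl_left_mul_inr_right x]
  simp only [mul_inv_rev, map_mul, map_inv, inl_aut, mul_assoc]

def prodSubgroup (D : Subgroup N) (S : Subgroup G) (hDS : ∀ s ∈ S, ∀ d ∈ D, φ s d ∈ D) :
    Subgroup (N ⋊[φ] G) where
  carrier := {x | x.left ∈ D ∧ x.right ∈ S}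
  one_mem' := ⟨D.one_mem, S.one_mem⟩
  mul_mem' := fun ha hb => ⟨D.mul_mem ha.1 (hDS _ ha.2 _ hb.1), S.mul_mem ha.2 hb.2⟩
  inv_mem' := fun ha => ⟨hDS _ (S.inv_mem ha.2) _ (D.inv_mem ha.1), S.inv_mem ha.2⟩

variable {D : Subgroup N} {S : Subgroup G} {hDS : ∀ s ∈ S, ∀ d ∈ D, φ s d ∈ D}

theorem card_prodSubgroup : Nat.card (prodSubgroup D S hDS) = Nat.card D * Nat.card S := by
  rw [← Nat.card_prod]
  exact Nat.card_congr <| (equivProd.subtypeEquiv fun _ => Iff.rfl).trans Equiv.subtypeProdEquivProd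

theorem isPiGroup_prodSubgroup (hD : IsPiGroup π D) (hS : IsPiGroup π S) :
    IsPiGroup π (prodSubgroup D S hDS) := by
  intro p hp hpDS
  rw [card_prodSubgroup, hp.dvd_mul] at hpDS
  exact hpDS.elim (hD p hp) (hS p hp)

end SemidirectProduct

namespace RegularWreathProductSD

open SemidirectProduct

variable {X Y : Type*} [Group X] [Group Y]

instance [Finite X] [Finite Y] : Finite (RegularWreathProductSD X Y) :=
  Finite.of_equiv _ equivProd.symm

theorem wreathAction_mulSingle [DecidableEq Y] (y z : Y) (a : X) :
    wreathAction X Y y (Pi.mulSingle z a) = Pi.mulSingle (y * z) a := by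
  ext w
  simp only [wreathAction, wreathAut, MonoidHom.coe_mk, OneHom.coe_mk, MulEquiv.coe_mk,
    Equiv.coe_fn_mk, Pi.mulSingle_apply, inv_mul_eq_iff_eq_mul]

theorem wreathAction_mem_pi {P : Y → Subgroup X} {y : Y} (hP : ∀ z, P (y⁻¹ * z) = P z)
    {f : Y → X} (hf : f ∈ Subgroup.pi Set.univ P) :
    wreathAction X Y y f ∈ Subgroup.pi Set.univ P := by
  rw [Subgroup.mem_pi] at hf ⊢
  intro z _
  rw [← hP z]
  exact hf (y⁻¹ * z) trivial

def baseProjection (H : Subgroup (RegularWreathProductSD X Y)) (z : Y) : Subgroup X :=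
  (H.comap inl).map (Pi.evalMonoidHom (fun _ => X) z)

variable {H : Subgroup (RegularWreathProductSD X Y)}

theorem isPiGroup_baseProjection (hH : IsPiGroup π H) (z : Y) :
    IsPiGroup π (baseProjection H z) :=
  (hH.comap_of_injective inl_injective).map _

theorem conj_mem_baseProjection [DecidableEq Y] {x : RegularWreathProductSD X Y} (hx : x ∈ H)
    {z : Y} {a : X} (ha : inl (Pi.mulSingle z a) ∈ H) :
    x.left (x.right * z) * a * (x.left (x.right * z))⁻¹ ∈ baseProjection H (x.right * z) := by
  refine ⟨x.left * wreathAction X Y x.right (Pi.mulSingle z a) * x.left⁻¹, ?_, ?_⟩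
  · rw [SetLike.mem_coe, Subgroup.mem_comap, ← conj_inl]
    exact H.mul_mem (H.mul_mem hx ha) (H.inv_mem hx)
  · simp [wreathAction_mulSingle]

open Classical in
theorem map_rightHom_le_of_pi_le {A B : Subgroup X} (hA : IsPiMaximal π A) (hB : IsPiMaximal π B)
    (hAB : ∀ g : X, A.map (MulAut.conj g).toMonoidHom ≠ B) {S : Subgroup Y}
    (hH : IsPiGroup π H)
    (hD : Subgroup.pi Set.univ (fun z => if z ∈ S then A else B) ≤ H.comap inl) :
    H.map rightHom ≤ S := by
  have hsingleA {a : X} (ha : a ∈ A) : inl (Pi.mulSingle 1 a) ∈ H :=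
    hD (by simpa [S.one_mem] using ha)
  have hsingleB {z : Y} (hz : z ∉ S) {b : X} (hb : b ∈ B) :
      inl (Pi.mulSingle z b) ∈ H :=
    hD (by simpa [hz] using hb)
  rintro _ ⟨x, hx, rfl⟩
  by_contra hxS
  have hprojB : baseProjection H x.right = B :=
    hB.2 _ (isPiGroup_baseProjection hH _) fun b hb => ⟨_, hsingleB hxS hb, by simp⟩
  refine hAB (x.left x.right) ((hA.map_equiv _).2 B hB.1 ?_).symm
  rintro _ ⟨a, ha, rfl⟩
  simpa [hprojB] using conj_mem_baseProjection hx (hsingleA ha)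

end RegularWreathProductSD

/-- Let `X` be a finite group with at least two conjugacy classes of `π`-maximal
subgroups, `Y` any finite group, `G = X ≀ Y` the regular wreath product and
`φ : G → Y` the natural epimorphism (with kernel `X^Y`). Then every `π`-subgroup of `Y`
is the image under `φ` of some `π`-maximal subgroup of `G`. -/
theorem stmt19 (π : Set ℕ) (X Y : Type) [Group X] [Finite X] [Group Y] [Finite Y]
    (htwoclasses : ∃ A B : Subgroup X, IsPiMaximal π A ∧ IsPiMaximal π B ∧
      ∀ g : X, A.map (MulAut.conj g).toMonoidHom ≠ B) :
    ∀ S : Subgroup Y, IsPiGroup π S →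
      ∃ H : Subgroup (RegularWreathProductSD X Y), IsPiMaximal π H ∧
        H.map SemidirectProduct.rightHom = S := by
  classical
  obtain ⟨A, B, hA, hB, hAB⟩ := htwoclasses
  intro S hS
  let P : Y → Subgroup X := fun z => if z ∈ S then A else B
  have hPinv : ∀ s ∈ S, ∀ z, P (s⁻¹ * z) = P z := fun s hs z => by
    simp only [P, Subgroup.mul_mem_cancel_left S (S.inv_mem hs)]
  let H₀ := SemidirectProduct.prodSubgroup (Subgroup.pi Set.univ P) S
    fun s hs _ hf => RegularWreathProductSD.wreathAction_mem_pi (hPinv s hs) hf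
  have hH₀ : IsPiGroup π H₀ := SemidirectProduct.isPiGroup_prodSubgroup
    (IsPiGroup.pi fun z => by by_cases hz : z ∈ S <;> simp [P, hz, hA.1, hB.1]) hS
  obtain ⟨H, hH, hH₀H⟩ := exists_isPiMaximal_le hH₀
  refine ⟨H, hH, le_antisymm ?_ ?_⟩
  · exact RegularWreathProductSD.map_rightHom_le_of_pi_le hA hB hAB hH.1
      fun f hf => hH₀H ⟨hf, S.one_mem⟩
  · exact fun s hs =>
      ⟨_, hH₀H ⟨(Subgroup.pi Set.univ P).one_mem, hs⟩, SemidirectProduct.rightHom_inr s⟩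
end
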